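/- arXiv:2311.05493 — 6 statements merged into one kernel-verified Lean document; each statement's English description precedes it below -/
import Mathlib

section
/- Let f : N → M be a homomorphism of commutative monoids and let N^gp, M^gp denote their group completions. Define the exactification N^ex to be the pullback of the diagram M → M^gp ← N^gp. Then the induced map N^ex → M is exact, i.e. the square with vertical maps N^ex → M and (N^ex)^gp → M^gp and horizontal group-completion maps is cartesian, provided M is integral (injects into M^gp). -/
/-- The exactification `N^ex`, defined as the pullback `M ×_{M^gp} N^gp` of the diagram
`M → M^gp ← N^gp`, realized as a submonoid of `M × N^gp`. -/
def exactification {M Ngp Mgp : Type} [CommMonoid M] [CommGroup Ngp] [CommGroup Mgp]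
    (ιM : M →* Mgp) (fgp : Ngp →* Mgp) : Submonoid (M × Ngp) where
  carrier := {p | ιM p.1 = fgp p.2}
  one_mem' := by simp
  mul_mem' := by
    intro a b ha hb
    simp only [Set.mem_setOf_eq, Prod.fst_mul, Prod.snd_mul, map_mul] at *
    rw [ha, hb]

/-- Let `f : N → M` be a homomorphism of commutative monoids, with group
completions `ιN : N → N^gp` and `ιM : M → M^gp` (characterized by their universal properties),
and let `f^gp` be the induced map.  If `M` is integral (`ιM` is injective), then the
exactification `N^ex = M ×_{M^gp} N^gp` maps exactly to `M`: the square formed by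
`N^ex → M`, the group-completion maps, and `(N^ex)^gp → M^gp` is cartesian, i.e. the
canonical map from `N^ex` to the pullback `M ×_{M^gp} (N^ex)^gp` is bijective. -/
theorem exactification_is_exact
    {N M Ngp Mgp : Type} [CommMonoid N] [CommMonoid M] [CommGroup Ngp] [CommGroup Mgp]
    (f : N →* M) (ιN : N →* Ngp) (ιM : M →* Mgp)
    (hN : ∀ (H : Type) [CommGroup H] (g : N →* H), ∃! h : Ngp →* H, ∀ n, h (ιN n) = g n)
    (hM : ∀ (H : Type) [CommGroup H] (g : M →* H), ∃! h : Mgp →* H, ∀ m, h (ιM m) = g m)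
    (fgp : Ngp →* Mgp) (hfgp : ∀ n, fgp (ιN n) = ιM (f n))
    -- a group completion of the exactification
    (Egp : Type) [CommGroup Egp] (ιE : (exactification ιM fgp) →* Egp)
    (hE : ∀ (H : Type) [CommGroup H] (g : (exactification ιM fgp) →* H),
      ∃! h : Egp →* H, ∀ x, h (ιE x) = g x)
    -- the map `(N^ex)^gp → M^gp` induced by `N^ex → M`
    (ggp : Egp →* Mgp)
    (hggp : ∀ x : exactification ιM fgp, ggp (ιE x) = ιM (x : M × Ngp).1)
    -- `M` is integral
    (hint : Function.Injective ιM) :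
    Function.Bijective
      (fun x : exactification ιM fgp =>
        (⟨((x : M × Ngp).1, ιE x), (hggp x).symm⟩ :
          {p : M × Egp // ιM p.1 = ggp p.2})) := by
  -- every element of Egp is a quotient ιE a * (ιE b)⁻¹
  have key : ∀ e : Egp, ∃ a b : exactification ιM fgp, e = ιE a * (ιE b)⁻¹ := by
    let T : Subgroup Egp :=
      { carrier := {e | ∃ a b : exactification ιM fgp, e = ιE a * (ιE b)⁻¹}
        one_mem' := ⟨1, 1, by simp⟩
        mul_mem' := by
          rintro x y ⟨a, b, rfl⟩ ⟨c, d, rfl⟩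
          exact ⟨a * c, b * d, by simp [mul_comm, mul_assoc, mul_left_comm]⟩
        inv_mem' := by
          rintro x ⟨a, b, rfl⟩
          exact ⟨b, a, by simp⟩ }
    let g : exactification ιM fgp →* T :=
      { toFun := fun x => ⟨ιE x, x, 1, by simp⟩
        map_one' := by ext; simp
        map_mul' := fun x y => by ext; simp }
    obtain ⟨h, hh, -⟩ := hE T g
    obtain ⟨h0, -, hu⟩ := hE Egp ιE
    have h1 : T.subtype.comp h = MonoidHom.id Egp := by
      rw [hu (T.subtype.comp h) (fun x => by simp [hh x, g]),
        hu (MonoidHom.id Egp) (fun x => by simp)]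
    intro e
    have : T.subtype (h e) = e := DFunLike.congr_fun h1 e
    rw [← this]
    exact (h e).2
  constructor
  · -- injectivity
    intro x y hxy
    have h1 : (x : M × Ngp).1 = (y : M × Ngp).1 := congrArg (fun p => p.1.1) hxy
    have h2 : ιE x = ιE y := congrArg (fun p => p.1.2) hxy
    -- project to Ngp through the universal property
    let π : exactification ιM fgp →* Ngp :=
      { toFun := fun x => (x : M × Ngp).2
        map_one' := rfl
        map_mul' := fun _ _ => rfl }
    obtain ⟨p, hp, -⟩ := hE Ngp π
    have h3 : (x : M × Ngp).2 = (y : M × Ngp).2 := by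
      have hpx := hp x
      have hpy := hp y
      simp only [π, MonoidHom.coe_mk, OneHom.coe_mk] at hpx hpy
      rw [← hpx, ← hpy, h2]
    exact Subtype.ext (Prod.ext h1 h3)
  · -- surjectivity
    rintro ⟨⟨m, e⟩, he⟩
    obtain ⟨a, b, rfl⟩ := key e
    simp only at he
    have hab : ggp (ιE a * (ιE b)⁻¹) = ιM (a : M × Ngp).1 * (ιM (b : M × Ngp).1)⁻¹ := by
      rw [map_mul, map_inv, hggp, hggp]
    have hma : ιM ((a : M × Ngp).1) = ιM (m * (b : M × Ngp).1) := by
      rw [map_mul]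
      rw [hab] at he
      rw [he]
      group
    have hmab : (a : M × Ngp).1 = m * (b : M × Ngp).1 := hint hma
    have hxmem : (m, (a : M × Ngp).2 * ((b : M × Ngp).2)⁻¹) ∈ exactification ιM fgp := by
      have ha := a.2
      have hb := b.2
      simp only [exactification, Submonoid.mem_mk, Subsemigroup.mem_mk,
        Set.mem_setOf_eq] at ha hb ⊢
      rw [map_mul, map_inv, ← ha, ← hb, hmab, map_mul]
      group
    refine ⟨⟨_, hxmem⟩, ?_⟩
    have hprod : (⟨_, hxmem⟩ : exactification ιM fgp) * b = a := by
      refine Subtype.ext (Prod.ext ?_ ?_)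
      · exact hmab.symm
      · show (a : M × Ngp).2 * ((b : M × Ngp).2)⁻¹ * (b : M × Ngp).2 = (a : M × Ngp).2
        group
    have hE' : ιE (⟨_, hxmem⟩ : exactification ιM fgp) = ιE a * (ιE b)⁻¹ := by
      have := congrArg ιE hprod
      rw [map_mul] at this
      rw [← this]; group
    exact Subtype.ext (Prod.ext rfl hE')
end

section
/- Let M be an abelian group, N a commutative monoid, and f : N → M a monoid homomorphism admitting a section s : M → N such that f is exact (the square N → N^gp → M^gp ← M is a pullback). Then N ≅ M × f⁻¹(0) as monoids over M, via the map (m, n) ↦ s(m)·n. -/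
/-- Let `M` be an abelian group, `N` a commutative monoid and `f : N → M` a
monoid homomorphism admitting a section `s` and which is exact: since `M` is a group it is its
own group completion, and exactness means that the canonical map from `N` to the pullback
`M ×_{M^gp} N^gp` is bijective.  Then the map `M × f⁻¹(1) → N`, `(m, n) ↦ s(m) * n` is an
isomorphism of commutative monoids over and under `M`: it is bijective, multiplicative,
commutes with the projections to `M`, and with the inclusions of `M`. -/
theorem split_exact_over_group_iso
    {N M Ngp : Type} [CommMonoid N] [CommGroup M] [CommGroup Ngp]
    (f : N →* M) (s : M →* N) (hs : ∀ m, f (s m) = m)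
    (ιN : N →* Ngp)
    (hN : ∀ (H : Type) [CommGroup H] (g : N →* H), ∃! h : Ngp →* H, ∀ n, h (ιN n) = g n)
    (fgp : Ngp →* M) (hfgp : ∀ n, fgp (ιN n) = f n)
    -- exactness of `f`: the group-completion square is cartesian
    (hexact : Function.Bijective
      (fun n : N => (⟨(f n, ιN n), (hfgp n).symm⟩ : {p : M × Ngp // p.1 = fgp p.2}))) :
    Function.Bijective (fun p : M × (MonoidHom.mker f) => s p.1 * (p.2 : N)) ∧
    (∀ p q : M × (MonoidHom.mker f),
      s (p * q).1 * ((p * q).2 : N) = (s p.1 * (p.2 : N)) * (s q.1 * (q.2 : N))) ∧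
    (∀ p : M × (MonoidHom.mker f), f (s p.1 * (p.2 : N)) = p.1) ∧
    (∀ m : M, s m * ((1 : MonoidHom.mker f) : N) = s m) := by
  -- key consequence of injectivity of the comparison map
  have hinj : ∀ a b : N, f a = f b → ιN a = ιN b → a = b := by
    intro a b h1 h2
    exact hexact.1 (Subtype.ext (Prod.ext h1 h2))
  refine ⟨⟨?_, ?_⟩, ?_, ?_, ?_⟩
  · -- injectivity
    rintro ⟨p1, p2, hp2⟩ ⟨q1, q2, hq2⟩ h
    simp only [MonoidHom.mem_mker] at hp2 hq2
    simp only at h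
    have hm : p1 = q1 := by
      have := congrArg f h
      simpa [hs, hp2, hq2] using this
    subst hm
    have hι : ιN p2 = ιN q2 := by
      have := congrArg ιN h
      simp only [map_mul] at this
      exact mul_left_cancel this
    have : p2 = q2 := hinj _ _ (hp2.trans hq2.symm) hι
    simp [this]
  · -- surjectivity
    intro n
    obtain ⟨k, hk⟩ := hexact.2 ⟨(1, (ιN (s (f n)))⁻¹ * ιN n), by
      simp [hfgp, hs]⟩
    have hk1 : f k = 1 := congrArg Prod.fst (congrArg Subtype.val hk)
    have hk2 : ιN k = (ιN (s (f n)))⁻¹ * ιN n :=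
      congrArg Prod.snd (congrArg Subtype.val hk)
    refine ⟨(f n, ⟨k, hk1⟩), ?_⟩
    simp only
    refine hinj _ _ ?_ ?_
    · simp [hs, hk1]
    · simp [map_mul, hk2, mul_comm]
  · -- multiplicativity
    rintro ⟨p1, p2⟩ ⟨q1, q2⟩
    simp only [Prod.fst_mul, Prod.snd_mul, map_mul, Submonoid.coe_mul]
    rw [mul_mul_mul_comm]
  · -- over M
    rintro ⟨p1, p2, hp2⟩
    simp only [MonoidHom.mem_mker] at hp2
    simp [hs, hp2]
  · -- under M
    intro m
    simp
end

section
/- Let (A, M, α) be a pre-log ring. The logification (A, Mᵃ, αᵃ), where Mᵃ is the pushout of commutative monoids M ← α⁻¹(Aˣ) → Aˣ and αᵃ is induced by α and the inclusion Aˣ ⊆ (A,·), is a log ring: the preimage (αᵃ)⁻¹(Aˣ) maps isomorphically onto Aˣ. -/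
/-- Let `(A, M, α)` be a pre-log ring.  Its logification `(A, Mᵃ, αᵃ)`,
where `Mᵃ` is the pushout of commutative monoids `M ← α⁻¹(Aˣ) → Aˣ` (characterized by its
universal property) and `αᵃ` is induced by `α` and the inclusion `Aˣ ⊆ (A, ·)`, is a log
ring: the preimage `(αᵃ)⁻¹(Aˣ)` maps isomorphically (bijectively) onto `Aˣ`. -/
theorem logification_is_log
    {A M Ma : Type} [CommRing A] [CommMonoid M] [CommMonoid Ma] (α : M →* A)
    -- the restriction `α⁻¹(Aˣ) → Aˣ` of `α`
    (r : (Submonoid.comap α (IsUnit.submonoid A)) →* Aˣ)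
    (hr : ∀ x : Submonoid.comap α (IsUnit.submonoid A), ((r x : Aˣ) : A) = α x)
    -- pushout data for `Mᵃ`
    (j : M →* Ma) (u : Aˣ →* Ma)
    (hcomm : ∀ x : Submonoid.comap α (IsUnit.submonoid A), j (x : M) = u (r x))
    (hpush : ∀ (T : Type) [CommMonoid T] (g : M →* T) (h : Aˣ →* T),
      (∀ x : Submonoid.comap α (IsUnit.submonoid A), g (x : M) = h (r x)) →
      ∃! k : Ma →* T, (∀ m, k (j m) = g m) ∧ (∀ v, k (u v) = h v))
    -- the induced structure map `αᵃ`
    (αa : Ma →* A) (hαaj : ∀ m, αa (j m) = α m) (hαau : ∀ v : Aˣ, αa (u v) = (v : A)) :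
    Function.Bijective
      (fun x : {x : Ma // IsUnit (αa x)} => (x.2.unit : Aˣ)) := by
  classical
  let G := Submonoid.comap α (IsUnit.submonoid A)
  -- the congruence on M × Aˣ
  let c : Con (M × Aˣ) :=
  { r := fun p q => ∃ g g' : G, p.1 * g = q.1 * g' ∧ p.2 * (r g)⁻¹ = q.2 * (r g')⁻¹
    iseqv := by
      refine ⟨fun p => ⟨1, 1, rfl, rfl⟩, ?_, ?_⟩
      · rintro p q ⟨g, g', h1, h2⟩
        exact ⟨g', g, h1.symm, h2.symm⟩
      · rintro p q s ⟨g, g', h1, h2⟩ ⟨h, h', h3, h4⟩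
        refine ⟨g * h, h' * g', ?_, ?_⟩
        · push_cast
          calc p.1 * (↑g * ↑h) = (p.1 * g) * h := by rw [mul_assoc]
            _ = (q.1 * g') * h := by rw [h1]
            _ = (q.1 * h) * g' := by rw [mul_assoc, mul_comm (g' : M) (h : M), ← mul_assoc]
            _ = (s.1 * h') * g' := by rw [h3]
            _ = s.1 * (↑h' * ↑g') := by rw [mul_assoc]
        · rw [map_mul, map_mul, mul_inv, mul_inv]
          calc p.2 * ((r g)⁻¹ * (r h)⁻¹) = (p.2 * (r g)⁻¹) * (r h)⁻¹ := by rw [mul_assoc]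
            _ = (q.2 * (r g')⁻¹) * (r h)⁻¹ := by rw [h2]
            _ = (q.2 * (r h)⁻¹) * (r g')⁻¹ := by
                rw [mul_assoc, mul_comm ((r g')⁻¹) ((r h)⁻¹), ← mul_assoc]
            _ = (s.2 * (r h')⁻¹) * (r g')⁻¹ := by rw [h4]
            _ = s.2 * ((r h')⁻¹ * (r g')⁻¹) := by rw [mul_assoc]
    mul' := by
      rintro p q s t ⟨g, g', h1, h2⟩ ⟨h, h', h3, h4⟩
      refine ⟨g * h, g' * h', ?_, ?_⟩
      · push_cast
        show p.1 * s.1 * (↑g * ↑h) = q.1 * t.1 * (↑g' * ↑h')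
        calc p.1 * s.1 * (↑g * ↑h) = (p.1 * g) * (s.1 * h) := by
              rw [mul_assoc, mul_assoc]; congr 1
              rw [← mul_assoc, mul_comm (s.1) (g : M), mul_assoc]
          _ = (q.1 * g') * (t.1 * h') := by rw [h1, h3]
          _ = q.1 * t.1 * (↑g' * ↑h') := by
              rw [mul_assoc, mul_assoc]; congr 1
              rw [← mul_assoc, mul_comm (g' : M) (t.1), mul_assoc]
      · show p.2 * s.2 * (r (g * h))⁻¹ = q.2 * t.2 * (r (g' * h'))⁻¹
        rw [map_mul, map_mul, mul_inv, mul_inv]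
        calc p.2 * s.2 * ((r g)⁻¹ * (r h)⁻¹) = (p.2 * (r g)⁻¹) * (s.2 * (r h)⁻¹) := by
              rw [mul_mul_mul_comm]
          _ = (q.2 * (r g')⁻¹) * (t.2 * (r h')⁻¹) := by rw [h2, h4]
          _ = q.2 * t.2 * ((r g')⁻¹ * (r h')⁻¹) := by rw [mul_mul_mul_comm] }
  -- the model pushout
  let P := c.Quotient
  let j' : M →* P := c.mk'.comp (MonoidHom.inl M Aˣ)
  let u' : Aˣ →* P := c.mk'.comp (MonoidHom.inr M Aˣ)
  have hcomm' : ∀ x : G, j' (x : M) = u' (r x) := by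
    intro x
    show c.mk' ((x : M), 1) = c.mk' (1, r x)
    refine (Con.eq c).mpr ⟨1, x, ?_, ?_⟩
    · simp
    · simp
  obtain ⟨k, ⟨hkj, hku⟩, -⟩ := hpush P j' u' hcomm'
  -- the map back
  let f : M × Aˣ →* Ma := (j.comp (MonoidHom.fst M Aˣ)) * ((u.comp (MonoidHom.snd M Aˣ)))
  have hf : ∀ p : M × Aˣ, f p = j p.1 * u p.2 := fun p => rfl
  have hfc : c ≤ Con.ker f := by
    rintro p q ⟨g, g', h1, h2⟩
    show f p = f q
    rw [hf, hf]
    have e1 : j p.1 * u (r g) = j q.1 * u (r g') := by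
      rw [← hcomm, ← hcomm, ← map_mul, ← map_mul, h1]
    have e2 : p.2 = q.2 * (r g')⁻¹ * (r g) := by
      rw [← h2, mul_assoc, inv_mul_cancel, mul_one]
    calc j p.1 * u p.2 = j p.1 * u (r g) * (u (r g')⁻¹ * u q.2) := by
          rw [e2, map_mul, map_mul]; ac_rfl
      _ = j q.1 * u (r g') * (u (r g')⁻¹ * u q.2) := by rw [e1]
      _ = j q.1 * u q.2 := by
          rw [mul_assoc, ← mul_assoc (u (r g')), ← map_mul, mul_inv_cancel, map_one, one_mul]
  let l : P →* Ma := c.lift f hfc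
  -- l ∘ k = id
  obtain ⟨k0, -, huniq⟩ := hpush Ma j u hcomm
  have hlk : ∀ x : Ma, l (k x) = x := by
    have h1 : l.comp k = k0 := by
      refine huniq _ ⟨fun m => ?_, fun v => ?_⟩
      · show l (k (j m)) = j m
        rw [hkj]
        show f (m, 1) = j m
        rw [hf]; simp
      · show l (k (u v)) = u v
        rw [hku]
        show f (1, v) = u v
        rw [hf]; simp
    have h2 : MonoidHom.id Ma = k0 := by
      refine huniq _ ⟨fun m => rfl, fun v => rfl⟩
    intro x
    have := congrArg (fun φ : Ma →* Ma => φ x) (h1.trans h2.symm)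
    simpa using this
  -- key structural lemma
  have key : ∀ x : Ma, IsUnit (αa x) → ∃ v : Aˣ, x = u v ∧ (v : A) = αa x := by
    intro x hx
    obtain ⟨⟨m, v⟩, hmv⟩ := Quotient.exists_rep (k x)
    have hxeq : x = j m * u v := by
      have h := congrArg l hmv
      rw [hlk] at h
      refine h.symm.trans ?_
      show f (m, v) = j m * u v
      exact hf (m, v)
    have hαx : αa x = α m * (v : A) := by rw [hxeq, map_mul, hαaj, hαau]
    have hm : IsUnit (α m) := by
      have : α m = αa x * ((v⁻¹ : Aˣ) : A) := by
        rw [hαx, mul_assoc]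
        simp
      rw [this]
      exact hx.mul (Units.isUnit _)
    have hmG : m ∈ G := hm
    refine ⟨r ⟨m, hmG⟩ * v, ?_, ?_⟩
    · rw [hxeq, hcomm ⟨m, hmG⟩, ← map_mul]
    · rw [Units.val_mul, hr, hαx]
  constructor
  · rintro ⟨x, hx⟩ ⟨y, hy⟩ hxy
    simp only at hxy
    have hval : αa x = αa y := by
      rw [← hx.unit_spec, ← hy.unit_spec, hxy]
    obtain ⟨v, hv1, hv2⟩ := key x hx
    obtain ⟨w, hw1, hw2⟩ := key y hy
    have : v = w := Units.ext (by rw [hv2, hw2, hval])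
    refine Subtype.ext ?_
    show x = y
    rw [hv1, hw1, this]
  · intro v
    refine ⟨⟨u v, by rw [hαau]; exact v.isUnit⟩, ?_⟩
    exact Units.ext (by simp [hαau])
end

section
/- Let (A, M, α) be a pre-log ring with logification (A, Mᵃ, αᵃ). The natural map of log differential modules Ω¹_{(A,M)} → Ω¹_{(A,Mᵃ)} induced by M → Mᵃ is an isomorphism of A-modules. -/
open scoped TensorProduct

/-- The submodule of relations `dα(m) ∼ α(m) ⊗ [m]` defining the log Kähler differentials of
a pre-log ring `(A, M, α)` relative to a group completion `ι : M → G` of `M`. -/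
noncomputable def logRel (A : Type) [CommRing A] {M : Type} [CommMonoid M] (α : M →* A)
    {G : Type} [CommGroup G] (ι : M →* G) :
    Submodule A (KaehlerDifferential ℤ A × (A ⊗[ℤ] Additive G)) :=
  Submodule.span A
    {x | ∃ m : M,
      x = ((KaehlerDifferential.D ℤ A) (α m), 0) -
        (0, α m • ((1 : A) ⊗ₜ[ℤ] Additive.ofMul (ι m)))}

/-- The module of log Kähler differentials
`Ω¹_{(A,M)} = (Ω¹_A ⊕ (A ⊗_ℤ M^gp)) / ⟨dα(m) − α(m) ⊗ [m]⟩`. -/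
noncomputable abbrev LogDiff (A : Type) [CommRing A] {M : Type} [CommMonoid M] (α : M →* A)
    {G : Type} [CommGroup G] (ι : M →* G) : Type :=
  (KaehlerDifferential ℤ A × (A ⊗[ℤ] Additive G)) ⧸ logRel A α ι

/-!
The inverse of `Ω¹_{(A,M)} → Ω¹_{(A,Mᵃ)}` is the identity on `Ω¹_A` together with the map on
`(Mᵃ)^gp` induced by the hom `k : Mᵃ → Ω¹_{(A,M)}` that the pushout yields from `m ↦ 1 ⊗ [m]`
on `M` and `v ↦ v⁻¹ dv` on `Aˣ`; these agree on `α⁻¹(Aˣ)` thanks to the relation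
`dα(m) = α(m) ⊗ [m]`. For this to descend to the quotient we need `dαᵃ(x) = αᵃ(x) k(x)` for all
`x : Mᵃ`; the set of such `x` is a submonoid by the Leibniz rule, and it contains `j(M)` and
`u(Aˣ)`, which generate the pushout. That both composites are the identity follows from the
uniqueness in the universal properties of the pushout and of the group completions.
-/

theorem Submonoid.eq_top_of_isPushout {Q M P N : Type} [MulOneClass Q] [MulOneClass M]
    [MulOneClass P] [CommMonoid N] {f : Q →* M} {g : Q →* P} {j : M →* N} {u : P →* N}
    (hcomm : ∀ q, j (f q) = u (g q))
    (hpush : ∀ (T : Type) [CommMonoid T] (a : M →* T) (b : P →* T), (∀ q, a (f q) = b (g q)) →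
      ∃! k : N →* T, (∀ m, k (j m) = a m) ∧ ∀ v, k (u v) = b v)
    {S : Submonoid N} (hj : ∀ m, j m ∈ S) (hu : ∀ v, u v ∈ S) : S = ⊤ := by
  obtain ⟨k, ⟨hkj, hku⟩, -⟩ :=
    hpush S (j.codRestrict S hj) (u.codRestrict S hu) fun q => Subtype.ext (hcomm q)
  have hk : S.subtype.comp k = MonoidHom.id N :=
    (hpush N j u hcomm).unique ⟨fun m => by simp [hkj], fun v => by simp [hku]⟩
      ⟨fun _ => rfl, fun _ => rfl⟩
  refine eq_top_iff.2 fun x _ => ?_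
  rw [← MonoidHom.id_apply N x, ← hk]
  exact (k x).2

def Derivation.logCompatSubmonoid {R A M N : Type} [CommSemiring R] [CommSemiring A]
    [Algebra R A] [CommMonoid M] [AddCommMonoid N] [Module A N] [Module R N]
    [IsScalarTower R A N] (D : Derivation R A N) (α : M →* A) (δ : M →* Multiplicative N) :
    Submonoid M where
  carrier := {x | D (α x) = α x • (δ x).toAdd}
  one_mem' := by simp
  mul_mem' {x y} hx hy := by
    simp only [Set.mem_ofPred_eq, map_mul, Derivation.leibniz, toAdd_mul] at hx hy ⊢
    rw [hx, hy, smul_smul, smul_smul, mul_comm (α y), ← smul_add, add_comm]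

namespace LogDiff

variable {A : Type} [CommRing A] {M G : Type} [CommMonoid M] [CommGroup G]
  (α : M →* A) (ι : M →* G) {N : Type} [AddCommGroup N] [Module A N]

noncomputable def ofKaehler : KaehlerDifferential ℤ A →ₗ[A] LogDiff A α ι :=
  (logRel A α ι).mkQ ∘ₗ LinearMap.inl A _ _

theorem ofKaehler_apply (η : KaehlerDifferential ℤ A) :
    ofKaehler α ι η = Submodule.Quotient.mk (η, 0) := rfl

noncomputable def dlog : G →* Multiplicative (LogDiff A α ι) :=
  AddMonoidHom.toMultiplicativeRight
    (((logRel A α ι).mkQ ∘ₗ LinearMap.inr A _ _).toAddMonoidHom.comp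
      (TensorProduct.mk ℤ A (Additive G) 1).toAddMonoidHom)

theorem toAdd_dlog (x : G) :
    (dlog α ι x).toAdd = Submodule.Quotient.mk (0, (1 : A) ⊗ₜ[ℤ] Additive.ofMul x) := rfl

noncomputable def dlogUnit : Aˣ →* Multiplicative (LogDiff A α ι) where
  toFun v := .ofAdd (ofKaehler α ι (((v⁻¹ : Aˣ) : A) • KaehlerDifferential.D ℤ A v))
  map_one' := by simp
  map_mul' v w := by
    rw [← ofAdd_add, ← map_add]
    congr 2
    rw [Units.val_mul, Derivation.leibniz, smul_add, smul_smul, smul_smul, mul_inv, Units.val_mul,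
      mul_right_comm, Units.inv_mul, one_mul, mul_assoc, Units.inv_mul, mul_one, add_comm]

theorem toAdd_dlogUnit (v : Aˣ) :
    (dlogUnit α ι v).toAdd = ofKaehler α ι (((v⁻¹ : Aˣ) : A) • KaehlerDifferential.D ℤ A v) := rfl

theorem ofKaehler_D_eq (m : M) :
    ofKaehler α ι (KaehlerDifferential.D ℤ A (α m)) = α m • (dlog α ι (ι m)).toAdd := by
  rw [ofKaehler_apply, toAdd_dlog, ← Submodule.Quotient.mk_smul, Prod.smul_mk, smul_zero,
    Submodule.Quotient.eq]
  exact Submodule.subset_span ⟨m, rfl⟩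

theorem ofKaehler_D_unit (v : Aˣ) :
    ofKaehler α ι (KaehlerDifferential.D ℤ A v) = (v : A) • (dlogUnit α ι v).toAdd := by
  rw [toAdd_dlogUnit, ← map_smul, smul_smul, Units.mul_inv, one_smul]

variable {α ι}

theorem dlog_eq_dlogUnit {m : M} {v : Aˣ} (h : α m = v) :
    dlog α ι (ι m) = dlogUnit α ι v := by
  apply Multiplicative.toAdd.injective
  calc (dlog α ι (ι m)).toAdd
      = (((v⁻¹ : Aˣ) : A) * α m) • (dlog α ι (ι m)).toAdd := by rw [h, Units.inv_mul, one_smul]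
    _ = (dlogUnit α ι v).toAdd := by rw [mul_smul, ← ofKaehler_D_eq, h, toAdd_dlogUnit, map_smul]

theorem smul_toAdd_dlog (a : A) (x : G) :
    a • (dlog α ι x).toAdd = Submodule.Quotient.mk (0, a ⊗ₜ[ℤ] Additive.ofMul x) := by
  rw [toAdd_dlog, ← Submodule.Quotient.mk_smul, Prod.smul_mk, smul_zero,
    TensorProduct.smul_tmul', smul_eq_mul, mul_one]

theorem hom_ext {f g : LogDiff A α ι →ₗ[A] N}
    (hΩ : ∀ η, f (Submodule.Quotient.mk (η, 0)) = g (Submodule.Quotient.mk (η, 0)))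
    (hG : ∀ x : G, f (Submodule.Quotient.mk (0, (1 : A) ⊗ₜ Additive.ofMul x)) =
      g (Submodule.Quotient.mk (0, (1 : A) ⊗ₜ Additive.ofMul x))) :
    f = g := by
  refine Submodule.linearMap_qext _ (LinearMap.prod_ext (LinearMap.ext hΩ) ?_)
  refine TensorProduct.AlgebraTensorModule.ext fun a x => ?_
  change f (Submodule.Quotient.mk (0, a ⊗ₜ Additive.ofMul x.toMul)) =
    g (Submodule.Quotient.mk (0, a ⊗ₜ Additive.ofMul x.toMul))
  rw [← smul_toAdd_dlog, map_smul, map_smul, toAdd_dlog, hG]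

variable (α ι)

noncomputable def lift (ω : KaehlerDifferential ℤ A →ₗ[A] N) (ψ : G →* Multiplicative N)
    (h : ∀ m, ω (KaehlerDifferential.D ℤ A (α m)) = α m • (ψ (ι m)).toAdd) :
    LogDiff A α ι →ₗ[A] N :=
  (logRel A α ι).liftQ
    (ω.coprod ((MonoidHom.toAdditiveLeft ψ).toIntLinearMap.liftBaseChange A)) <| by
    rw [logRel, Submodule.span_le]
    rintro _ ⟨m, rfl⟩
    simp [h]

variable {α ι} {ω : KaehlerDifferential ℤ A →ₗ[A] N} {ψ : G →* Multiplicative N}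
  (h : ∀ m, ω (KaehlerDifferential.D ℤ A (α m)) = α m • (ψ (ι m)).toAdd)

@[simp] theorem lift_mk_left (η : KaehlerDifferential ℤ A) :
    lift α ι ω ψ h (Submodule.Quotient.mk (η, 0)) = ω η := by
  simp [lift]

@[simp] theorem lift_mk_tmul (a : A) (x : G) :
    lift α ι ω ψ h (Submodule.Quotient.mk (0, a ⊗ₜ Additive.ofMul x)) = a • (ψ x).toAdd := by
  simp [lift]

section map

variable {M' G' : Type} [CommMonoid M'] [CommGroup G'] {α' : M' →* A} {ι' : M' →* G'}

noncomputable def map (f : M →* M') (fgp : G →* G') (hα : ∀ m, α' (f m) = α m)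
    (hι : ∀ m, fgp (ι m) = ι' (f m)) : LogDiff A α ι →ₗ[A] LogDiff A α' ι' :=
  lift α ι (ofKaehler α' ι') ((dlog α' ι').comp fgp) fun m => by
    rw [← hα, ofKaehler_D_eq, MonoidHom.comp_apply, hι]

variable {f : M →* M'} {fgp : G →* G'} (hα : ∀ m, α' (f m) = α m)
  (hι : ∀ m, fgp (ι m) = ι' (f m))

@[simp] theorem map_mk_left (η : KaehlerDifferential ℤ A) :
    map f fgp hα hι (Submodule.Quotient.mk (η, 0)) = Submodule.Quotient.mk (η, 0) :=
  lift_mk_left ..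

@[simp] theorem map_mk_tmul (a : A) (x : G) :
    map f fgp hα hι (Submodule.Quotient.mk (0, a ⊗ₜ Additive.ofMul x)) =
      Submodule.Quotient.mk (0, a ⊗ₜ Additive.ofMul (fgp x)) := by
  rw [map, lift_mk_tmul, MonoidHom.comp_apply, smul_toAdd_dlog]

theorem map_toAdd_dlog (x : G) :
    map f fgp hα hι (dlog α ι x).toAdd = (dlog α' ι' (fgp x)).toAdd :=
  map_mk_tmul hα hι 1 x

theorem map_toAdd_dlogUnit (v : Aˣ) :
    map f fgp hα hι (dlogUnit α ι v).toAdd = (dlogUnit α' ι' v).toAdd :=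
  map_mk_left hα hι _

variable {ψ' : G' →* Multiplicative (LogDiff A α ι)}
  (hψ' : ∀ m, ofKaehler α ι (KaehlerDifferential.D ℤ A (α' m)) = α' m • (ψ' (ι' m)).toAdd)

theorem lift_ofKaehler_comp_map (hψ'fgp : ψ'.comp fgp = dlog α ι) :
    lift α' ι' (ofKaehler α ι) ψ' hψ' ∘ₗ map f fgp hα hι = LinearMap.id := by
  refine hom_ext (fun η => ?_) (fun x => ?_)
  · rw [LinearMap.comp_apply, map_mk_left, lift_mk_left]
    rfl
  · rw [LinearMap.comp_apply, map_mk_tmul, lift_mk_tmul, one_smul, ← MonoidHom.comp_apply,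
      hψ'fgp, toAdd_dlog]
    rfl

theorem map_comp_lift_ofKaehler
    (hmapψ' : ∀ y, map f fgp hα hι (ψ' y).toAdd = (dlog α' ι' y).toAdd) :
    map f fgp hα hι ∘ₗ lift α' ι' (ofKaehler α ι) ψ' hψ' = LinearMap.id := by
  refine hom_ext (fun η => ?_) (fun y => ?_)
  · rw [LinearMap.comp_apply, lift_mk_left, ofKaehler_apply, map_mk_left]
    rfl
  · rw [LinearMap.comp_apply, lift_mk_tmul, one_smul, hmapψ', toAdd_dlog]
    rfl

end map

section logification

variable {Q Ma Ga : Type} [MulOneClass Q] [CommMonoid Ma] [CommGroup Ga]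
  {f : Q →* M} {g : Q →* Aˣ} {j : M →* Ma} {u : Aˣ →* Ma} {αa : Ma →* A}
  {k : Ma →* Multiplicative (LogDiff A α ι)}

theorem ofKaehler_D_eq_of_isPushout (hcomm : ∀ q, j (f q) = u (g q))
    (hpush : ∀ (T : Type) [CommMonoid T] (a : M →* T) (b : Aˣ →* T),
      (∀ q, a (f q) = b (g q)) → ∃! k : Ma →* T, (∀ m, k (j m) = a m) ∧ ∀ v, k (u v) = b v)
    (hαaj : ∀ m, αa (j m) = α m) (hαau : ∀ v : Aˣ, αa (u v) = v)
    (hkj : ∀ m, k (j m) = dlog α ι (ι m)) (hku : ∀ v, k (u v) = dlogUnit α ι v) (x : Ma) :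
    ofKaehler α ι (KaehlerDifferential.D ℤ A (αa x)) = αa x • (k x).toAdd := by
  have htop : ((ofKaehler α ι).compDer (KaehlerDifferential.D ℤ A)).logCompatSubmonoid αa k = ⊤ :=
    Submonoid.eq_top_of_isPushout hcomm hpush
      (fun m => by
        change ofKaehler α ι (KaehlerDifferential.D ℤ A (αa (j m))) = _
        rw [hαaj, hkj, ofKaehler_D_eq])
      (fun v => by
        change ofKaehler α ι (KaehlerDifferential.D ℤ A (αa (u v))) = _
        rw [hαau, hku, ofKaehler_D_unit])
  exact (Submonoid.eq_top_iff' _).1 htop x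

theorem map_toAdd_of_isPushout {ιa : Ma →* Ga} {jgp : G →* Ga} (hcomm : ∀ q, j (f q) = u (g q))
    (hpush : ∀ (T : Type) [CommMonoid T] (a : M →* T) (b : Aˣ →* T),
      (∀ q, a (f q) = b (g q)) → ∃! k : Ma →* T, (∀ m, k (j m) = a m) ∧ ∀ v, k (u v) = b v)
    (hαaj : ∀ m, αa (j m) = α m) (hαau : ∀ v : Aˣ, αa (u v) = v)
    (hjgp : ∀ m, jgp (ι m) = ιa (j m))
    (hkj : ∀ m, k (j m) = dlog α ι (ι m)) (hku : ∀ v, k (u v) = dlogUnit α ι v) (x : Ma) :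
    map j jgp hαaj hjgp (k x).toAdd = (dlog αa ιa (ιa x)).toAdd := by
  set Φ := AddMonoidHom.toMultiplicative (map j jgp hαaj hjgp).toAddMonoidHom
  have hΦk : Φ.comp k = (dlog αa ιa).comp ιa :=
    (hpush _ (((dlog αa ιa).comp ιa).comp j) (((dlog αa ιa).comp ιa).comp u)
      fun q => by simp only [MonoidHom.comp_apply, hcomm]).unique
      ⟨fun m => by
        rw [MonoidHom.comp_apply, hkj, AddMonoidHom.toMultiplicative_apply_apply,
          LinearMap.toAddMonoidHom_coe, map_toAdd_dlog, hjgp, ofAdd_toAdd]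
        rfl,
      fun v => by
        rw [MonoidHom.comp_apply, hku, AddMonoidHom.toMultiplicative_apply_apply,
          LinearMap.toAddMonoidHom_coe, map_toAdd_dlogUnit, ofAdd_toAdd,
          MonoidHom.comp_apply, MonoidHom.comp_apply, dlog_eq_dlogUnit (hαau v)]⟩
      ⟨fun _ => rfl, fun _ => rfl⟩
  exact congrArg Multiplicative.toAdd (DFunLike.congr_fun hΦk x)

end logification

end LogDiff

/-- Let `(A, M, α)` be a pre-log ring with logification `(A, Mᵃ, αᵃ)`
(`Mᵃ` the pushout of `M ← α⁻¹(Aˣ) → Aˣ`, presented by its universal property).  The natural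
map `Ω¹_{(A,M)} → Ω¹_{(A,Mᵃ)}` — given by the identity on `Ω¹_A` and the induced map
`M^gp → (Mᵃ)^gp` — exists and is an isomorphism of `A`-modules. -/
theorem logDiff_logification_invariance
    {A M G Ma Ga : Type} [CommRing A] [CommMonoid M] [CommGroup G]
    [CommMonoid Ma] [CommGroup Ga]
    (α : M →* A) (ι : M →* G)
    (hG : ∀ (H : Type) [CommGroup H] (g : M →* H), ∃! h : G →* H, ∀ m, h (ι m) = g m)
    -- logification data: the restriction of `α` to `α⁻¹(Aˣ)`
    (r : (Submonoid.comap α (IsUnit.submonoid A)) →* Aˣ)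
    (hr : ∀ x : Submonoid.comap α (IsUnit.submonoid A), ((r x : Aˣ) : A) = α x)
    (j : M →* Ma) (u : Aˣ →* Ma)
    (hcomm : ∀ x : Submonoid.comap α (IsUnit.submonoid A), j (x : M) = u (r x))
    (hpush : ∀ (T : Type) [CommMonoid T] (g : M →* T) (h : Aˣ →* T),
      (∀ x : Submonoid.comap α (IsUnit.submonoid A), g (x : M) = h (r x)) →
      ∃! k : Ma →* T, (∀ m, k (j m) = g m) ∧ (∀ v, k (u v) = h v))
    (αa : Ma →* A) (hαaj : ∀ m, αa (j m) = α m) (hαau : ∀ v : Aˣ, αa (u v) = (v : A))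
    -- group completion of `Mᵃ` and the induced map `M^gp → (Mᵃ)^gp`
    (ιa : Ma →* Ga)
    (hGa : ∀ (H : Type) [CommGroup H] (g : Ma →* H), ∃! h : Ga →* H, ∀ x, h (ιa x) = g x)
    (jgp : G →* Ga) (hjgp : ∀ m, jgp (ι m) = ιa (j m)) :
    (∃ φ : LogDiff A α ι →ₗ[A] LogDiff A αa ιa,
      (∀ ω : KaehlerDifferential ℤ A,
        φ (Submodule.Quotient.mk (p := logRel A α ι) (ω, 0)) =
          Submodule.Quotient.mk (p := logRel A αa ιa) (ω, 0)) ∧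
      (∀ (a : A) (x : G),
        φ (Submodule.Quotient.mk (p := logRel A α ι) (0, a ⊗ₜ[ℤ] Additive.ofMul x)) =
          Submodule.Quotient.mk (p := logRel A αa ιa) (0, a ⊗ₜ[ℤ] Additive.ofMul (jgp x)))) ∧
    (∀ φ : LogDiff A α ι →ₗ[A] LogDiff A αa ιa,
      ((∀ ω : KaehlerDifferential ℤ A,
        φ (Submodule.Quotient.mk (p := logRel A α ι) (ω, 0)) =
          Submodule.Quotient.mk (p := logRel A αa ιa) (ω, 0)) ∧
      (∀ (a : A) (x : G),
        φ (Submodule.Quotient.mk (p := logRel A α ι) (0, a ⊗ₜ[ℤ] Additive.ofMul x)) =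
          Submodule.Quotient.mk (p := logRel A αa ιa) (0, a ⊗ₜ[ℤ] Additive.ofMul (jgp x)))) →
      Function.Bijective φ) := by
  open LogDiff in
  obtain ⟨k, ⟨hkj, hku⟩, -⟩ := hpush _ ((dlog α ι).comp ι) (dlogUnit α ι)
    fun x => dlog_eq_dlogUnit (hr x).symm
  obtain ⟨ψ, hψ, -⟩ := hGa _ k
  have hψjgp : ψ.comp jgp = dlog α ι :=
    (hG _ ((dlog α ι).comp ι)).unique (fun m => by simp [hjgp, hψ, hkj]) (fun _ => rfl)
  have hmapψ : (AddMonoidHom.toMultiplicative (map j jgp hαaj hjgp).toAddMonoidHom).comp ψ =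
      dlog αa ιa :=
    (hGa _ ((dlog αa ιa).comp ιa)).unique
      (fun x => by
        rw [MonoidHom.comp_apply, hψ]
        exact congrArg Multiplicative.ofAdd <| map_toAdd_of_isPushout (f := Submonoid.subtype _)
          hcomm hpush hαaj hαau hjgp hkj hku x)
      (fun _ => rfl)
  have hkey : ∀ x, ofKaehler α ι (KaehlerDifferential.D ℤ A (αa x)) = αa x • (ψ (ιa x)).toAdd :=
    fun x => hψ x ▸ ofKaehler_D_eq_of_isPushout (f := Submonoid.subtype _) hcomm hpush hαaj hαau
      hkj hku x
  refine ⟨⟨map j jgp hαaj hjgp, map_mk_left hαaj hjgp, map_mk_tmul hαaj hjgp⟩,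
    fun φ ⟨hφΩ, hφG⟩ => ?_⟩
  obtain rfl : φ = map j jgp hαaj hjgp :=
    hom_ext (fun η => by rw [hφΩ, map_mk_left]) (fun x => by rw [hφG, map_mk_tmul])
  exact Function.bijective_iff_has_inverse.2 ⟨lift αa ιa (ofKaehler α ι) ψ hkey,
    LinearMap.congr_fun (lift_ofKaehler_comp_map hαaj hjgp hkey hψjgp),
    LinearMap.congr_fun (map_comp_lift_ofKaehler hαaj hjgp hkey
      fun y => congrArg Multiplicative.toAdd (DFunLike.congr_fun hmapψ y))⟩
end

section
/- Let (R, P, α) be a pre-log ring and let (f, f♭) : (R, P) → (A, M) be a map of pre-log rings whose induced map of logifications (A, Pᵃ') → (A, Mᵃ) is an isomorphism (i.e. the map is strict), where Pᵃ' denotes the logification of the pre-log structure P → (R,·) → (A,·). If additionally R → A is surjective with square-zero kernel, then Mᵃ is isomorphic to the pushout of commutative monoids Pᵃ ← Rˣ → Aˣ, where Pᵃ is the logification of (R, P) and Rˣ → Pᵃ is the canonical inclusion of units. -/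
/-!
Because the kernel of `f` is nil, an element of `R` is a unit as soon as its image in `A` is
one: if `f (r * s) = 1` then `r * s` is `1` plus a nilpotent element. Hence the two submonoids
`α_R⁻¹(Rˣ)` and `(f ∘ α_R)⁻¹(Aˣ)` of `P` coincide, so `Mᵃ` is the pushout of
`P ← α_R⁻¹(Rˣ) → Rˣ → Aˣ`. Since the left square `P ← α_R⁻¹(Rˣ) → Rˣ` has pushout `Pᵃ`,
pasting of pushout squares identifies `Mᵃ` with the pushout of `Pᵃ ← Rˣ → Aˣ`.
-/

theorem isUnit_of_isUnit_map_of_isNilpotent_ker {R A : Type*} [CommRing R] [Ring A]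
    {f : R →+* A} (hsurj : Function.Surjective f) (hnil : ∀ x, f x = 0 → IsNilpotent x)
    {r : R} (hr : IsUnit (f r)) : IsUnit r := by
  obtain ⟨s, hs⟩ := hsurj ↑hr.unit⁻¹
  have hker : f (r * s - 1) = 0 := by simp [hs]
  have hunit : IsUnit (r * s) := by
    simpa using (hnil _ hker).isUnit_one_add
  exact isUnit_of_mul_isUnit_left hunit

/-- Only the universal property: commutativity of the square is a separate hypothesis. -/
def IsMonoidPushout {S P U Q : Type} [CommMonoid P] [CommMonoid U] [CommMonoid Q]
    (i : S → P) (r : S → U) (j : P →* Q) (u : U →* Q) : Prop :=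
  ∀ (T : Type) [CommMonoid T] (g : P →* T) (h : U →* T), (∀ s, g (i s) = h (r s)) →
    ∃! k : Q →* T, (∀ x, k (j x) = g x) ∧ ∀ v, k (u v) = h v

namespace IsMonoidPushout

variable {S P U Q : Type} [CommMonoid P] [CommMonoid U] [CommMonoid Q]
  {i : S → P} {r : S → U} {j : P →* Q} {u : U →* Q}

theorem hom_ext (hP : IsMonoidPushout i r j u) (hcomm : ∀ s, j (i s) = u (r s))
    {T : Type} [CommMonoid T] {k₁ k₂ : Q →* T}
    (hj : ∀ x, k₁ (j x) = k₂ (j x)) (hu : ∀ v, k₁ (u v) = k₂ (u v)) : k₁ = k₂ := by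
  have hcompat : ∀ s, (k₂.comp j) (i s) = (k₂.comp u) (r s) := fun s => by
    simp only [MonoidHom.comp_apply, hcomm]
  exact (hP T _ _ hcompat).unique ⟨hj, hu⟩ ⟨fun _ => rfl, fun _ => rfl⟩

theorem of_left_of_outer {V W S' : Type} [CommMonoid V] [CommMonoid W]
    (hL : IsMonoidPushout i r j u) (hcommL : ∀ s, j (i s) = u (r s))
    {w : U →* V} {ψ : Q →* W} {uW : V →* W} {i' : S' → P} {r' : S' → V} {j' : P →* W}
    (hψj : ∀ x, ψ (j x) = j' x) (hψu : ∀ v, ψ (u v) = uW (w v))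
    (hO : IsMonoidPushout i' r' j' uW)
    (hlift : ∀ s', ∃ s, i s = i' s' ∧ w (r s) = r' s') :
    IsMonoidPushout u w ψ uW := by
  intro T _ g h hgh
  have hcompat : ∀ s', (g.comp j) (i' s') = h (r' s') := fun s' => by
    obtain ⟨s, hi, hr⟩ := hlift s'
    rw [MonoidHom.comp_apply, ← hi, hcommL, hgh, hr]
  obtain ⟨k, ⟨hkj, hku⟩, hkuniq⟩ := hO T (g.comp j) h hcompat
  have hkψ : k.comp ψ = g := hL.hom_ext hcommL
    (fun x => by simp only [MonoidHom.comp_apply, hψj, hkj])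
    (fun v => by simp only [MonoidHom.comp_apply, hψu, hku, hgh])
  refine ⟨k, ⟨fun x => DFunLike.congr_fun hkψ x, hku⟩, fun k' ⟨hk'ψ, hk'u⟩ => ?_⟩
  exact hkuniq k' ⟨fun x => by rw [← hψj, hk'ψ, MonoidHom.comp_apply], hk'u⟩

end IsMonoidPushout

theorem strict_sq_zero_logification_pushout_general
    {R A P M : Type} [CommRing R] [CommRing A] [CommMonoid P] [CommMonoid M]
    (αR : P →* R) (f : R →+* A) (fb : P →* M)
    (hsurj : Function.Surjective f)
    (hsq : ∀ x y : R, f x = 0 → f y = 0 → x * y = 0)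
    -- the logification `Pᵃ` of `(R, P)`
    (Pa : Type) [CommMonoid Pa] (jP : P →* Pa) (uR : Rˣ →* Pa)
    (rR : (Submonoid.comap αR (IsUnit.submonoid R)) →* Rˣ)
    (hrR : ∀ x : Submonoid.comap αR (IsUnit.submonoid R), ((rR x : Rˣ) : R) = αR x)
    (hPa : ∀ x : Submonoid.comap αR (IsUnit.submonoid R), jP (x : P) = uR (rR x))
    (hPapush : ∀ (T : Type) [CommMonoid T] (g : P →* T) (h : Rˣ →* T),
      (∀ x : Submonoid.comap αR (IsUnit.submonoid R), g (x : P) = h (rR x)) →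
      ∃! k : Pa →* T, (∀ x, k (jP x) = g x) ∧ (∀ v, k (uR v) = h v))
    -- strictness: `Mᵃ` is the logification of the inverse-image pre-log structure
    (Ma : Type) [CommMonoid Ma] (jM : M →* Ma) (uA : Aˣ →* Ma)
    (rInv : (Submonoid.comap (f.toMonoidHom.comp αR) (IsUnit.submonoid A)) →* Aˣ)
    (hrInv : ∀ x : Submonoid.comap (f.toMonoidHom.comp αR) (IsUnit.submonoid A),
      ((rInv x : Aˣ) : A) = f (αR (x : P)))
    (hMapush : ∀ (T : Type) [CommMonoid T] (g : P →* T) (h : Aˣ →* T),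
      (∀ x : Submonoid.comap (f.toMonoidHom.comp αR) (IsUnit.submonoid A),
        g (x : P) = h (rInv x)) →
      ∃! k : Ma →* T, (∀ x, k (jM (fb x)) = g x) ∧ (∀ v, k (uA v) = h v))
    -- the induced map `ψ : Pᵃ → Mᵃ`
    (ψ : Pa →* Ma) (hψj : ∀ x : P, ψ (jP x) = jM (fb x))
    (hψu : ∀ v : Rˣ, ψ (uR v) = uA (Units.map f.toMonoidHom v)) :
    ∀ (T : Type) [CommMonoid T] (g : Pa →* T) (h : Aˣ →* T),
      (∀ v : Rˣ, g (uR v) = h (Units.map f.toMonoidHom v)) →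
      ∃! k : Ma →* T, (∀ x, k (ψ x) = g x) ∧ (∀ v, k (uA v) = h v) := by
  have hunit : ∀ r : R, IsUnit (f r) → IsUnit r := fun _ =>
    isUnit_of_isUnit_map_of_isNilpotent_ker hsurj
      fun x hx => ⟨2, by rw [pow_two]; exact hsq x x hx hx⟩
  refine IsMonoidPushout.of_left_of_outer (i := Subtype.val) (i' := Subtype.val)
    (j' := jM.comp fb) hPapush hPa hψj hψu hMapush fun x => ⟨⟨x.1, hunit _ x.2⟩, rfl, ?_⟩
  exact Units.ext ((congrArg f (hrR _)).trans (hrInv x).symm)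

/-- Let `(f, f♭) : (R, P) → (A, M)` be a strict map of pre-log rings whose
underlying ring map is surjective with square-zero kernel.  Strictness means that `Mᵃ` agrees
with the logification of the inverse-image pre-log structure `P → (R,·) → (A,·)`; here this
is encoded by presenting `Mᵃ` (= `Ma`) as the pushout of `P ← (f∘α_R)⁻¹(Aˣ) → Aˣ`.  Let
`Pᵃ` (= `Pa`) be the logification of `(R, P)`, presented as the pushout of
`P ← α_R⁻¹(Rˣ) → Rˣ`, and let `ψ : Pᵃ → Mᵃ` be the induced map.  Then `Mᵃ` is the pushout
of commutative monoids `Pᵃ ← Rˣ → Aˣ`: the maps `ψ` and `Aˣ → Mᵃ` satisfy the universal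
property of the pushout along `Rˣ → Pᵃ` and `Rˣ → Aˣ`. -/
theorem strict_sq_zero_logification_pushout
    {R A P M : Type} [CommRing R] [CommRing A] [CommMonoid P] [CommMonoid M]
    (αR : P →* R) (αA : M →* A) (f : R →+* A) (fb : P →* M)
    (hcompat : ∀ x : P, f (αR x) = αA (fb x))
    (hsurj : Function.Surjective f)
    (hsq : ∀ x y : R, f x = 0 → f y = 0 → x * y = 0)
    -- the logification `Pᵃ` of `(R, P)`
    (Pa : Type) [CommMonoid Pa] (jP : P →* Pa) (uR : Rˣ →* Pa)
    (rR : (Submonoid.comap αR (IsUnit.submonoid R)) →* Rˣ)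
    (hrR : ∀ x : Submonoid.comap αR (IsUnit.submonoid R), ((rR x : Rˣ) : R) = αR x)
    (hPa : ∀ x : Submonoid.comap αR (IsUnit.submonoid R), jP (x : P) = uR (rR x))
    (hPapush : ∀ (T : Type) [CommMonoid T] (g : P →* T) (h : Rˣ →* T),
      (∀ x : Submonoid.comap αR (IsUnit.submonoid R), g (x : P) = h (rR x)) →
      ∃! k : Pa →* T, (∀ x, k (jP x) = g x) ∧ (∀ v, k (uR v) = h v))
    -- strictness: `Mᵃ` is the logification of the inverse-image pre-log structure
    (Ma : Type) [CommMonoid Ma] (jM : M →* Ma) (uA : Aˣ →* Ma)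
    (rInv : (Submonoid.comap (f.toMonoidHom.comp αR) (IsUnit.submonoid A)) →* Aˣ)
    (hrInv : ∀ x : Submonoid.comap (f.toMonoidHom.comp αR) (IsUnit.submonoid A),
      ((rInv x : Aˣ) : A) = f (αR (x : P)))
    (hMa : ∀ x : Submonoid.comap (f.toMonoidHom.comp αR) (IsUnit.submonoid A),
      jM (fb (x : P)) = uA (rInv x))
    (hMapush : ∀ (T : Type) [CommMonoid T] (g : P →* T) (h : Aˣ →* T),
      (∀ x : Submonoid.comap (f.toMonoidHom.comp αR) (IsUnit.submonoid A),
        g (x : P) = h (rInv x)) →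
      ∃! k : Ma →* T, (∀ x, k (jM (fb x)) = g x) ∧ (∀ v, k (uA v) = h v))
    -- the induced map `ψ : Pᵃ → Mᵃ`
    (ψ : Pa →* Ma) (hψj : ∀ x : P, ψ (jP x) = jM (fb x))
    (hψu : ∀ v : Rˣ, ψ (uR v) = uA (Units.map f.toMonoidHom v)) :
    ∀ (T : Type) [CommMonoid T] (g : Pa →* T) (h : Aˣ →* T),
      (∀ v : Rˣ, g (uR v) = h (Units.map f.toMonoidHom v)) →
      ∃! k : Ma →* T, (∀ x, k (ψ x) = g x) ∧ (∀ v, k (uA v) = h v) :=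
  strict_sq_zero_logification_pushout_general αR f fb hsurj hsq Pa jP uR rR hrR hPa hPapush Ma jM uA
    rInv hrInv hMapush ψ hψj hψu
end

section
/- Let A be a commutative ring, M a commutative monoid with a monoid map to the multiplicative monoid of A making (A, M) a pre-log ring, and consider the multiplication (codiagonal) map of pre-log rings (A ⊗_ℤ A, M ⊕ M) → (A, M). Its repletion on monoids is (M ⊕ M)^rep = M ×_{M^gp} (M ⊕ M)^gp = M ×_{M^gp} (M^gp ⊕ M^gp), the pullback of M → M^gp ← M^gp ⊕ M^gp along the sum map. If M is integral, then sending an element (m, x, y) of (M ⊕ M)^rep, where x + y = [m] in M^gp, to (m, x − [m]) ∈ M ⊕ M^gp is an isomorphism of commutative monoids (M ⊕ M)^rep ≅ M ⊕ M^gp. -/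
/-- The repletion of the codiagonal `M ⊕ M → M`: the pullback
`M ×_{M^gp} (M^gp ⊕ M^gp)` along the sum map, realized as a submonoid of
`M × (M^gp × M^gp)` (using that `M^gp × M^gp` is a group completion of `M ⊕ M`). -/
def codiagRepletion {M Mgp : Type} [CommMonoid M] [CommGroup Mgp] (ι : M →* Mgp) :
    Submonoid (M × (Mgp × Mgp)) where
  carrier := {p | ι p.1 = p.2.1 * p.2.2}
  one_mem' := by simp
  mul_mem' := by
    intro a b ha hb
    simp only [Set.mem_setOf_eq, Prod.fst_mul, Prod.snd_mul, map_mul] at *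
    rw [ha, hb]
    exact mul_mul_mul_comm _ _ _ _

/-- Let `(A, M)` be a pre-log ring with `M` integral, and consider the
codiagonal map `(A ⊗ A, M ⊕ M) → (A, M)`.  Its repletion on monoids is the pullback
`(M ⊕ M)^rep = M ×_{M^gp} (M^gp ⊕ M^gp)` along the sum (multiplication) map.  The map
`(M ⊕ M)^rep → M ⊕ M^gp` sending an element `(m, (x, y))` with `x·y = [m]` to
`(m, x·[m]⁻¹)` is an isomorphism of commutative monoids: it is bijective and
multiplicative. -/
theorem codiag_repletion_iso
    {M Mgp : Type} [CommMonoid M] [CommGroup Mgp] (ι : M →* Mgp)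
    (hU : ∀ (H : Type) [CommGroup H] (g : M →* H), ∃! h : Mgp →* H, ∀ m, h (ι m) = g m)
    (hint : Function.Injective ι) :
    Function.Bijective
      (fun p : codiagRepletion ι =>
        (((p : M × (Mgp × Mgp)).1, (p : M × (Mgp × Mgp)).2.1 * (ι (p : M × (Mgp × Mgp)).1)⁻¹) :
          M × Mgp)) ∧
    ∀ p q : codiagRepletion ι,
      ((((p * q : codiagRepletion ι) : M × (Mgp × Mgp)).1,
          ((p * q : codiagRepletion ι) : M × (Mgp × Mgp)).2.1 *
            (ι ((p * q : codiagRepletion ι) : M × (Mgp × Mgp)).1)⁻¹) : M × Mgp) =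
        ((p : M × (Mgp × Mgp)).1, (p : M × (Mgp × Mgp)).2.1 * (ι (p : M × (Mgp × Mgp)).1)⁻¹) *
          ((q : M × (Mgp × Mgp)).1, (q : M × (Mgp × Mgp)).2.1 * (ι (q : M × (Mgp × Mgp)).1)⁻¹) := by
  constructor
  · constructor
    · rintro ⟨⟨m, x, y⟩, hp⟩ ⟨⟨m', x', y'⟩, hq⟩ h
      replace hp : ι m = x * y := hp
      replace hq : ι m' = x' * y' := hq
      simp only [Prod.mk.injEq] at h
      obtain ⟨h1, h2⟩ := h
      subst h1
      have hx : x = x' := by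
        have := mul_right_cancel h2
        exact this
      subst hx
      have hy : y = y' := by
        have : x * y = x * y' := hp.symm.trans hq
        exact mul_left_cancel this
      subst hy
      rfl
    · rintro ⟨m, x⟩
      refine ⟨⟨(m, x * ι m, x⁻¹), ?_⟩, ?_⟩
      · simp [codiagRepletion, mul_comm, mul_assoc]
      · simp [mul_assoc]
  · rintro ⟨⟨m, x, y⟩, hp⟩ ⟨⟨m', x', y'⟩, hq⟩
    simp only [Submonoid.coe_mul, Prod.fst_mul, Prod.snd_mul, map_mul, Prod.mk_mul_mk,
      Prod.mk.injEq, mul_inv_rev]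
    refine ⟨trivial, ?_⟩
    rw [mul_comm (ι m')⁻¹ (ι m)⁻¹]
    exact mul_mul_mul_comm _ _ _ _
end
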